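/- arXiv:1206.5081 — 2 statements merged into one kernel-verified Lean document; each statement's English description precedes it below -/
import Mathlib

section
/- Let M > 0 be the unique solution of 1 − α_μ − β_μ = 1/μ, where α_μ = (1/√μ)·arctan(k₀²/√μ) and β_μ = (1/√μ)·arctan(k₁²/√μ). Define q*(x) = M for x ∈ [α_M, 1 − β_M] and q*(x) = 0 otherwise. Then q* ≥ 0, ∫₀¹ q* dx = 1, λ₁(q*) = M, and for every q ∈ L¹[0,1] with q ≥ 0 a.e. and ∫₀¹ q dx = 1 one has λ₁(q) ≤ M; consequently sup{λ₁(q) : q ∈ L¹[0,1], q ≥ 0 a.e., ∫₀¹ q dx = 1} = M and the supremum is attained at q*. -/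
/-!
Let `w` be the first eigenfunction for `q*`: `w = 1` on `[α_M, 1 - β_M]` and
`w x = cos (√M · dist (x, [α_M, 1 - β_M]))` outside. Its logarithmic derivative `u = w'/w`
solves the Riccati equation `u' = q* - M - u²`, and the definitions of `α_M`, `β_M` say exactly
that `u 0 = k₀²` and `u 1 = -k₁²`. Integrating `(u y²)'` (Picone's identity) rewrites the
Rayleigh numerator of `q*` at a test function `y` as `M ∫ y² + ∫ (y' - u y)²`, so
`λ₁(q*) = M`, attained at `w`. For any other admissible `q`, `w² ≤ 1` with equality on the
support of `q*` gives `∫ q w² ≤ ∫ q = 1 = ∫ q* w²`, so the Rayleigh quotient of `w` for `q` is at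
most `M`.
-/

open MeasureTheory Set Real Filter

/-- A test function on `[0,1]`: `y` is absolutely continuous on `[0,1]` with
derivative `g` belonging to `L²[0,1]`. -/
def IsTest (y g : ℝ → ℝ) : Prop :=
  (∀ x ∈ Icc (0:ℝ) 1, y x = y 0 + ∫ t in (0:ℝ)..x, g t) ∧
  IntegrableOn g (Icc (0:ℝ) 1) ∧
  IntegrableOn (fun x => (g x) ^ 2) (Icc (0:ℝ) 1)

/-- The set of Rayleigh quotients of test functions for the Sturm–Liouville problem
`-y'' + q y = λ y`, `y'(0) - k₀² y(0) = 0`, `y'(1) + k₁² y(1) = 0`. -/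
def RayleighSet (k0 k1 : ℝ) (q : ℝ → ℝ) : Set ℝ :=
  { r : ℝ | ∃ y g : ℝ → ℝ, IsTest y g ∧ (0 < ∫ x in (0:ℝ)..1, (y x) ^ 2) ∧
      r = ((∫ x in (0:ℝ)..1, ((g x) ^ 2 + q x * (y x) ^ 2))
            + k0 ^ 2 * (y 0) ^ 2 + k1 ^ 2 * (y 1) ^ 2) / (∫ x in (0:ℝ)..1, (y x) ^ 2) }

/-- The first eigenvalue `λ₁(q)` defined as the infimum of the Rayleigh quotient. -/
noncomputable def lam1 (k0 k1 : ℝ) (q : ℝ → ℝ) : ℝ :=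
  sInf (RayleighSet k0 k1 q)

/-- `alphaCoef k μ = (1/√μ) · arctan(k²/√μ)`. -/
noncomputable def alphaCoef (k μ : ℝ) : ℝ :=
  (1 / Real.sqrt μ) * Real.arctan (k ^ 2 / Real.sqrt μ)

/-- The optimal potential for `M₁⁺`: equal to `M` on `[α_M, 1 - β_M]` and `0` otherwise. -/
noncomputable def qstar (k0 k1 M : ℝ) : ℝ → ℝ :=
  fun x => if alphaCoef k0 M ≤ x ∧ x ≤ 1 - alphaCoef k1 M then M else 0

open scoped Interval

open scoped Interval

theorem AbsolutelyContinuousOnInterval.congr {f g : ℝ → ℝ} {a b : ℝ}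
    (hf : AbsolutelyContinuousOnInterval f a b) (hfg : EqOn f g (uIcc a b)) :
    AbsolutelyContinuousOnInterval g a b := by
  refine Tendsto.congr' (eventually_inf_principal.2 (Eventually.of_forall fun E hE => ?_)) hf
  refine Finset.sum_congr rfl fun i hi => ?_
  rw [hfg (hE.1 i hi).1, hfg (hE.1 i hi).2]

theorem absolutelyContinuousOnInterval_of_eq_add_integral {F f : ℝ → ℝ} {a b : ℝ}
    (hab : a ≤ b) (hf : IntegrableOn f (Icc a b))
    (hF : ∀ x ∈ Icc a b, F x = F a + ∫ t in a..x, f t) :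
    AbsolutelyContinuousOnInterval F a b := by
  have hconst : AbsolutelyContinuousOnInterval (fun _ : ℝ => F a) a b :=
    (LipschitzWith.const (F a)).lipschitzOnWith.absolutelyContinuousOnInterval
  have hprim := ((intervalIntegrable_iff_integrableOn_Icc_of_le hab).2
    hf).absolutelyContinuousOnInterval_intervalIntegral (c := a) left_mem_uIcc
  refine (hconst.add hprim).congr fun x hx => ?_
  rw [uIcc_of_le hab] at hx
  exact (hF x hx).symm

theorem ae_hasDerivAt_of_eq_add_integral {F f : ℝ → ℝ} {a b : ℝ}
    (hab : a ≤ b) (hf : IntegrableOn f (Icc a b))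
    (hF : ∀ x ∈ Icc a b, F x = F a + ∫ t in a..x, f t) :
    ∀ᵐ x, x ∈ Icc a b → HasDerivAt F (f x) x := by
  have hfi := (intervalIntegrable_iff_integrableOn_Icc_of_le hab).2 hf
  filter_upwards [hfi.ae_hasDerivAt_integral, ((countable_singleton b).insert a).ae_notMem volume]
    with x hx hxab hx_mem
  have hx_mem' : x ∈ Ioo a b := by
    simp only [mem_insert_iff, mem_singleton_iff, not_or] at hxab
    exact ⟨lt_of_le_of_ne hx_mem.1 (Ne.symm hxab.1), lt_of_le_of_ne hx_mem.2 hxab.2⟩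
  refine ((hx (by rwa [uIcc_of_le hab]) a left_mem_uIcc).const_add (F a)).congr_of_eventuallyEq ?_
  filter_upwards [Ioo_mem_nhds hx_mem'.1 hx_mem'.2] with y hy using hF y (Ioo_subset_Icc_self hy)

theorem eq_add_integral_of_hasDerivAt_off_countable {F f : ℝ → ℝ} {a b : ℝ} {s : Set ℝ}
    (hs : s.Countable) (hF : ContinuousOn F (Icc a b))
    (hd : ∀ x ∈ Ioo a b \ s, HasDerivAt F (f x) x) (hf : IntegrableOn f (Icc a b)) :
    ∀ x ∈ Icc a b, F x = F a + ∫ t in a..x, f t := by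
  intro x hx
  have hsub : Icc a x ⊆ Icc a b := Icc_subset_Icc_right hx.2
  rw [integral_eq_of_hasDerivAt_off_countable_of_le F f hx.1 hs (hF.mono hsub)
    (fun y hy => hd y ⟨Ioo_subset_Ioo_right hx.2 hy.1, hy.2⟩)
    ((intervalIntegrable_iff_integrableOn_Icc_of_le hx.1).2 (hf.mono_set hsub))]
  ring

/-- Picone's identity: integrate `(u y²)' = (q - μ - u²) y² + 2 u y y'`. -/
theorem integral_sq_add_mul_sq_eq_of_riccati {u q y g : ℝ → ℝ} {a b μ : ℝ} (hab : a ≤ b)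
    (hq : IntegrableOn q (Icc a b)) (hu_cont : ContinuousOn u (Icc a b))
    (hu : ∀ x ∈ Icc a b, u x = u a + ∫ t in a..x, (q t - μ - u t ^ 2))
    (hy : ∀ x ∈ Icc a b, y x = y a + ∫ t in a..x, g t)
    (hg : IntegrableOn g (Icc a b)) (hg2 : IntegrableOn (fun x => g x ^ 2) (Icc a b)) :
    ∫ x in a..b, (g x ^ 2 + q x * y x ^ 2)
      = μ * (∫ x in a..b, y x ^ 2) + (∫ x in a..b, (g x - u x * y x) ^ 2)
        + u b * y b ^ 2 - u a * y a ^ 2 := by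
  have toII : ∀ {h : ℝ → ℝ}, IntegrableOn h (Icc a b) → IntervalIntegrable h volume a b :=
    (intervalIntegrable_iff_integrableOn_Icc_of_le hab).2
  have hv : IntegrableOn (fun t => q t - μ - u t ^ 2) (Icc a b) :=
    (hq.sub (integrableOn_const measure_Icc_lt_top.ne)).sub (hu_cont.pow 2).integrableOn_Icc
  have hu_ac := absolutelyContinuousOnInterval_of_eq_add_integral hab hv hu
  have hy_ac := absolutelyContinuousOnInterval_of_eq_add_integral hab hg hy
  have hy_cont : ContinuousOn y (Icc a b) := by simpa [uIcc_of_le hab] using hy_ac.continuousOn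
  have huy_cont : ContinuousOn (fun x => u x * y x) (Icc a b) := hu_cont.mul hy_cont
  have hy2 : IntegrableOn (fun x => μ * y x ^ 2) (Icc a b) :=
    ((hy_cont.pow 2).integrableOn_Icc).const_mul μ
  have hsq : IntegrableOn (fun x => (g x - u x * y x) ^ 2) (Icc a b) := by
    refine ((hg2.sub ((hg.continuousOn_mul huy_cont isCompact_Icc).const_mul 2)).add
      (huy_cont.pow 2).integrableOn_Icc).congr_fun (fun x _ => ?_) measurableSet_Icc
    simp only [Pi.add_apply, Pi.sub_apply, Pi.pow_apply]
    ring
  have hΦ := (hu_ac.fun_mul hy_ac).fun_mul hy_ac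
  have hΦ' : ∀ᵐ x, x ∈ Ι a b → g x ^ 2 + q x * y x ^ 2
      = (μ * y x ^ 2 + (g x - u x * y x) ^ 2) + deriv (fun x => u x * y x * y x) x := by
    filter_upwards [ae_hasDerivAt_of_eq_add_integral hab hv hu,
      ae_hasDerivAt_of_eq_add_integral hab hg hy] with x hux hyx hx
    have hx' : x ∈ Icc a b := Ioc_subset_Icc_self (by rwa [uIoc_of_le hab] at hx)
    rw [(((hux hx').fun_mul (hyx hx')).fun_mul (hyx hx')).deriv]
    ring
  rw [intervalIntegral.integral_congr_ae hΦ', intervalIntegral.integral_add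
      ((toII hy2).add (toII hsq)) hΦ.intervalIntegrable_deriv, hΦ.integral_deriv_eq_sub,
    intervalIntegral.integral_add (toII hy2) (toII hsq), intervalIntegral.integral_const_mul]
  ring

theorem hasDerivAt_max_min {a b x : ℝ} (ha : x ≠ a) (hb : x ≠ b) :
    HasDerivAt (fun y => max a (min y b)) (if a ≤ x ∧ x ≤ b then 1 else 0) x := by
  by_cases hmid : a < x ∧ x < b
  · rw [if_pos ⟨hmid.1.le, hmid.2.le⟩]
    refine (hasDerivAt_id x).congr_of_eventuallyEq ?_
    filter_upwards [Ioo_mem_nhds hmid.1 hmid.2] with y hy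
    simp [min_eq_left hy.2.le, max_eq_right hy.1.le]
  · rw [if_neg fun h => hmid ⟨lt_of_le_of_ne h.1 (Ne.symm ha), lt_of_le_of_ne h.2 hb⟩]
    rcases lt_or_gt_of_ne ha with hxa | hxa
    · refine (hasDerivAt_const x a).congr_of_eventuallyEq ?_
      filter_upwards [Iio_mem_nhds hxa] with y hy
      exact max_eq_left ((min_le_left y b).trans hy.le)
    · have hxb : b < x := lt_of_le_of_ne (not_lt.1 fun h => hmid ⟨hxa, h⟩) (Ne.symm hb)
      refine (hasDerivAt_const x (max a b)).congr_of_eventuallyEq ?_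
      filter_upwards [Ioi_mem_nhds hxb] with y hy
      rw [min_eq_right hy.le]

noncomputable def rayleighNumerator (k0 k1 : ℝ) (q y g : ℝ → ℝ) : ℝ :=
  (∫ x in (0:ℝ)..1, ((g x) ^ 2 + q x * (y x) ^ 2)) + k0 ^ 2 * (y 0) ^ 2 + k1 ^ 2 * (y 1) ^ 2

section Rayleigh

variable {k0 k1 : ℝ} {q y g : ℝ → ℝ}

theorem div_mem_rayleighSet (hy : IsTest y g) (hpos : 0 < ∫ x in (0:ℝ)..1, y x ^ 2) :
    rayleighNumerator k0 k1 q y g / ∫ x in (0:ℝ)..1, y x ^ 2 ∈ RayleighSet k0 k1 q :=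
  ⟨y, g, hy, hpos, rfl⟩

theorem rayleighNumerator_nonneg (hq : ∀ᵐ x ∂(volume.restrict (Icc (0:ℝ) 1)), 0 ≤ q x) :
    0 ≤ rayleighNumerator k0 k1 q y g := by
  have : 0 ≤ ∫ x in (0:ℝ)..1, (g x ^ 2 + q x * y x ^ 2) :=
    intervalIntegral.integral_nonneg_of_ae_restrict zero_le_one
      (hq.mono fun x hx => by positivity)
  unfold rayleighNumerator
  positivity

theorem lam1_le_of_mem_rayleighSet (hq : ∀ᵐ x ∂(volume.restrict (Icc (0:ℝ) 1)), 0 ≤ q x)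
    {r : ℝ} (hr : r ∈ RayleighSet k0 k1 q) : lam1 k0 k1 q ≤ r := by
  refine csInf_le ⟨0, ?_⟩ hr
  rintro _ ⟨y, g, -, hpos, rfl⟩
  exact div_nonneg (rayleighNumerator_nonneg hq) hpos.le

theorem rayleighNumerator_le_of_integral_le {q' : ℝ → ℝ}
    (hg : IntegrableOn (fun x => g x ^ 2) (Icc 0 1))
    (hq : IntegrableOn (fun x => q x * y x ^ 2) (Icc 0 1))
    (hq' : IntegrableOn (fun x => q' x * y x ^ 2) (Icc 0 1))
    (h : ∫ x in (0:ℝ)..1, q x * y x ^ 2 ≤ ∫ x in (0:ℝ)..1, q' x * y x ^ 2) :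
    rayleighNumerator k0 k1 q y g ≤ rayleighNumerator k0 k1 q' y g := by
  have toII : ∀ {h : ℝ → ℝ}, IntegrableOn h (Icc 0 1) → IntervalIntegrable h volume 0 1 :=
    (intervalIntegrable_iff_integrableOn_Icc_of_le zero_le_one).2
  unfold rayleighNumerator
  rw [intervalIntegral.integral_add (toII hg) (toII hq),
    intervalIntegral.integral_add (toII hg) (toII hq')]
  linarith

end Rayleigh

theorem alphaCoef_nonneg (k μ : ℝ) : 0 ≤ alphaCoef k μ :=
  mul_nonneg (by positivity) (arctan_nonneg.2 (by positivity))

theorem sqrt_mul_alphaCoef {μ : ℝ} (hμ : 0 < μ) (k : ℝ) :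
    √μ * alphaCoef k μ = arctan (k ^ 2 / √μ) := by
  have := (sqrt_pos.2 hμ).ne'
  unfold alphaCoef
  field_simp

section OptimalPotential

variable {k0 k1 M : ℝ}

/-- `eigenfun = cos ∘ phase` and `eigenLogDeriv = √M tan ∘ phase` are the first eigenfunction for
`qstar` and its logarithmic derivative; `|phase x| = √M · dist (x, [α_M, 1 - β_M])`. -/
noncomputable def phase (k0 k1 M x : ℝ) : ℝ :=
  √M * (max (alphaCoef k0 M) (min x (1 - alphaCoef k1 M)) - x)

noncomputable def eigenfun (k0 k1 M x : ℝ) : ℝ := cos (phase k0 k1 M x)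

noncomputable def eigenLogDeriv (k0 k1 M x : ℝ) : ℝ := √M * tan (phase k0 k1 M x)

theorem continuous_phase : Continuous (phase k0 k1 M) := by
  unfold phase; fun_prop

theorem phase_zero : phase k0 k1 M 0 = √M * alphaCoef k0 M := by
  rw [phase, max_eq_left ((min_le_left 0 _).trans (alphaCoef_nonneg k0 M)), sub_zero]

theorem phase_one (hα : alphaCoef k0 M ≤ 1 - alphaCoef k1 M) :
    phase k0 k1 M 1 = -(√M * alphaCoef k1 M) := by
  rw [phase, min_eq_right (by linarith [alphaCoef_nonneg k1 M]), max_eq_right hα]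
  ring

theorem phase_eq_zero {x : ℝ} (hx : alphaCoef k0 M ≤ x ∧ x ≤ 1 - alphaCoef k1 M) :
    phase k0 k1 M x = 0 := by
  rw [phase, min_eq_left hx.2, max_eq_right hx.1, sub_self, mul_zero]

theorem phase_mem_Icc (hα : alphaCoef k0 M ≤ 1 - alphaCoef k1 M) {x : ℝ}
    (hx : x ∈ Icc (0:ℝ) 1) :
    phase k0 k1 M x ∈ Icc (-(√M * alphaCoef k1 M)) (√M * alphaCoef k0 M) := by
  have h : max (alphaCoef k0 M) (min x (1 - alphaCoef k1 M)) - x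
      ∈ Icc (-alphaCoef k1 M) (alphaCoef k0 M) := by
    have := alphaCoef_nonneg k0 M
    have := alphaCoef_nonneg k1 M
    simp only [max_def, min_def, mem_Icc] at hx ⊢
    split_ifs <;> constructor <;> linarith
  rw [← mul_neg]
  exact ⟨mul_le_mul_of_nonneg_left h.1 (sqrt_nonneg M),
    mul_le_mul_of_nonneg_left h.2 (sqrt_nonneg M)⟩

theorem cos_phase_pos (hM : 0 < M) (hα : alphaCoef k0 M ≤ 1 - alphaCoef k1 M) {x : ℝ}
    (hx : x ∈ Icc (0:ℝ) 1) : 0 < cos (phase k0 k1 M x) := by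
  have h := phase_mem_Icc hα hx
  have h0 := sqrt_mul_alphaCoef hM k0 ▸ arctan_lt_pi_div_two (k0 ^ 2 / √M)
  have h1 := sqrt_mul_alphaCoef hM k1 ▸ arctan_lt_pi_div_two (k1 ^ 2 / √M)
  exact cos_pos_of_mem_Ioo ⟨by linarith [h.1], by linarith [h.2]⟩

theorem eigenLogDeriv_zero (hM : 0 < M) : eigenLogDeriv k0 k1 M 0 = k0 ^ 2 := by
  have := (sqrt_pos.2 hM).ne'
  rw [eigenLogDeriv, phase_zero, sqrt_mul_alphaCoef hM, tan_arctan]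
  field_simp

theorem eigenLogDeriv_one (hM : 0 < M) (hα : alphaCoef k0 M ≤ 1 - alphaCoef k1 M) :
    eigenLogDeriv k0 k1 M 1 = -k1 ^ 2 := by
  have := (sqrt_pos.2 hM).ne'
  rw [eigenLogDeriv, phase_one hα, tan_neg, sqrt_mul_alphaCoef hM, tan_arctan]
  field_simp

theorem hasDerivAt_phase {x : ℝ} (ha : x ≠ alphaCoef k0 M) (hc : x ≠ 1 - alphaCoef k1 M) :
    HasDerivAt (phase k0 k1 M)
      (if alphaCoef k0 M ≤ x ∧ x ≤ 1 - alphaCoef k1 M then 0 else -√M) x := by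
  refine (((hasDerivAt_max_min ha hc).sub (hasDerivAt_id x)).const_mul √M).congr_deriv ?_
  split_ifs <;> ring

theorem hasDerivAt_eigenLogDeriv (hM : 0 < M) {x : ℝ} (hcos : cos (phase k0 k1 M x) ≠ 0)
    (ha : x ≠ alphaCoef k0 M) (hc : x ≠ 1 - alphaCoef k1 M) :
    HasDerivAt (eigenLogDeriv k0 k1 M)
      (qstar k0 k1 M x - M - eigenLogDeriv k0 k1 M x ^ 2) x := by
  refine (((hasDerivAt_tan hcos).comp x (hasDerivAt_phase ha hc)).const_mul √M).congr_deriv ?_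
  rw [eigenLogDeriv, qstar]
  split_ifs with hx
  · rw [phase_eq_zero hx, tan_zero]; ring
  · rw [one_div, ← inv_one_add_tan_sq hcos, inv_inv]
    linear_combination (-1 : ℝ) * sq_sqrt hM.le

theorem hasDerivAt_eigenfun {x : ℝ} (hcos : cos (phase k0 k1 M x) ≠ 0)
    (ha : x ≠ alphaCoef k0 M) (hc : x ≠ 1 - alphaCoef k1 M) :
    HasDerivAt (eigenfun k0 k1 M) (eigenLogDeriv k0 k1 M x * eigenfun k0 k1 M x) x := by
  refine (hasDerivAt_phase ha hc).cos.congr_deriv ?_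
  rw [eigenLogDeriv, eigenfun, mul_assoc, tan_mul_cos hcos]
  split_ifs with hx
  · rw [phase_eq_zero hx, sin_zero]; ring
  · ring

theorem continuous_eigenfun : Continuous (eigenfun k0 k1 M) :=
  continuous_cos.comp continuous_phase

theorem continuousOn_eigenLogDeriv (hM : 0 < M) (hα : alphaCoef k0 M ≤ 1 - alphaCoef k1 M) :
    ContinuousOn (eigenLogDeriv k0 k1 M) (Icc 0 1) :=
  continuousOn_const.mul (continuousOn_tan.comp continuous_phase.continuousOn
    fun _ hx => (cos_phase_pos hM hα hx).ne')

theorem qstar_eq_indicator :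
    qstar k0 k1 M = (Icc (alphaCoef k0 M) (1 - alphaCoef k1 M)).indicator fun _ => M := by
  ext x
  simp [qstar, indicator_apply]

theorem qstar_nonneg (hM : 0 ≤ M) (x : ℝ) : 0 ≤ qstar k0 k1 M x := by
  rw [qstar_eq_indicator]
  exact indicator_nonneg (fun _ _ => hM) x

theorem integrableOn_qstar : IntegrableOn (qstar k0 k1 M) (Icc 0 1) := by
  rw [qstar_eq_indicator]
  exact (integrableOn_const measure_Icc_lt_top.ne).indicator measurableSet_Icc

theorem integral_qstar (hM : 0 < M) (hMeq : 1 - alphaCoef k0 M - alphaCoef k1 M = 1 / M) :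
    ∫ x in (0:ℝ)..1, qstar k0 k1 M x = 1 := by
  have hα : alphaCoef k0 M ≤ 1 - alphaCoef k1 M := by have := one_div_pos.2 hM; linarith
  have hsub : Icc (alphaCoef k0 M) (1 - alphaCoef k1 M) ⊆ Icc 0 1 :=
    Icc_subset_Icc (alphaCoef_nonneg k0 M) (by linarith [alphaCoef_nonneg k1 M])
  rw [qstar_eq_indicator, intervalIntegral.integral_of_le zero_le_one,
    ← integral_Icc_eq_integral_Ioc, setIntegral_indicator measurableSet_Icc, inter_eq_right.2 hsub,
    setIntegral_const, volume_real_Icc_of_le hα, smul_eq_mul,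
    show 1 - alphaCoef k1 M - alphaCoef k0 M = 1 / M by linarith]
  field_simp

theorem qstar_mul_eigenfun_sq (x : ℝ) :
    qstar k0 k1 M x * eigenfun k0 k1 M x ^ 2 = qstar k0 k1 M x := by
  unfold qstar
  split_ifs with hx
  · rw [eigenfun, phase_eq_zero hx, cos_zero, one_pow, mul_one]
  · rw [zero_mul]

theorem eigenLogDeriv_eq_add_integral (hM : 0 < M) (hα : alphaCoef k0 M ≤ 1 - alphaCoef k1 M) :
    ∀ x ∈ Icc (0:ℝ) 1, eigenLogDeriv k0 k1 M x = eigenLogDeriv k0 k1 M 0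
      + ∫ t in (0:ℝ)..x, (qstar k0 k1 M t - M - eigenLogDeriv k0 k1 M t ^ 2) := by
  have hu := continuousOn_eigenLogDeriv hM hα
  refine eq_add_integral_of_hasDerivAt_off_countable
    ((countable_singleton (1 - alphaCoef k1 M)).insert (alphaCoef k0 M)) hu
    (fun x ⟨hx, hxs⟩ => ?_) ((integrableOn_qstar.sub
      (integrableOn_const measure_Icc_lt_top.ne)).sub (hu.pow 2).integrableOn_Icc)
  simp only [mem_insert_iff, mem_singleton_iff, not_or] at hxs
  exact hasDerivAt_eigenLogDeriv hM (cos_phase_pos hM hα (Ioo_subset_Icc_self hx)).ne' hxs.1 hxs.2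

theorem isTest_eigenfun (hM : 0 < M) (hα : alphaCoef k0 M ≤ 1 - alphaCoef k1 M) :
    IsTest (eigenfun k0 k1 M) (fun x => eigenLogDeriv k0 k1 M x * eigenfun k0 k1 M x) := by
  have hg : ContinuousOn (fun x => eigenLogDeriv k0 k1 M x * eigenfun k0 k1 M x) (Icc 0 1) :=
    (continuousOn_eigenLogDeriv hM hα).mul continuous_eigenfun.continuousOn
  refine ⟨eq_add_integral_of_hasDerivAt_off_countable
    ((countable_singleton (1 - alphaCoef k1 M)).insert (alphaCoef k0 M))
    continuous_eigenfun.continuousOn (fun x ⟨hx, hxs⟩ => ?_) hg.integrableOn_Icc,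
    hg.integrableOn_Icc, (hg.pow 2).integrableOn_Icc⟩
  simp only [mem_insert_iff, mem_singleton_iff, not_or] at hxs
  exact hasDerivAt_eigenfun (cos_phase_pos hM hα (Ioo_subset_Icc_self hx)).ne' hxs.1 hxs.2

theorem integral_eigenfun_sq_pos (hM : 0 < M) (hα : alphaCoef k0 M ≤ 1 - alphaCoef k1 M) :
    0 < ∫ x in (0:ℝ)..1, eigenfun k0 k1 M x ^ 2 :=
  have hw2 : Continuous fun x => eigenfun k0 k1 M x ^ 2 := continuous_eigenfun.pow 2
  intervalIntegral.intervalIntegral_pos_of_pos_on (hw2.intervalIntegrable 0 1)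
    (fun _ hx => pow_pos (cos_phase_pos hM hα (Ioo_subset_Icc_self hx)) 2) zero_lt_one

theorem rayleighNumerator_qstar (hM : 0 < M) (hα : alphaCoef k0 M ≤ 1 - alphaCoef k1 M)
    {y g : ℝ → ℝ} (hy : IsTest y g) :
    rayleighNumerator k0 k1 (qstar k0 k1 M) y g = M * (∫ x in (0:ℝ)..1, y x ^ 2)
      + ∫ x in (0:ℝ)..1, (g x - eigenLogDeriv k0 k1 M x * y x) ^ 2 := by
  obtain ⟨hrep, hg, hg2⟩ := hy
  rw [rayleighNumerator, integral_sq_add_mul_sq_eq_of_riccati zero_le_one integrableOn_qstar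
    (continuousOn_eigenLogDeriv hM hα) (eigenLogDeriv_eq_add_integral hM hα) hrep hg hg2,
    eigenLogDeriv_zero hM, eigenLogDeriv_one hM hα]
  ring

theorem rayleighNumerator_qstar_eigenfun (hM : 0 < M)
    (hα : alphaCoef k0 M ≤ 1 - alphaCoef k1 M) :
    rayleighNumerator k0 k1 (qstar k0 k1 M) (eigenfun k0 k1 M)
      (fun x => eigenLogDeriv k0 k1 M x * eigenfun k0 k1 M x)
      = M * ∫ x in (0:ℝ)..1, eigenfun k0 k1 M x ^ 2 := by
  simp [rayleighNumerator_qstar hM hα (isTest_eigenfun hM hα)]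

theorem isLeast_rayleighSet_qstar (hM : 0 < M) (hα : alphaCoef k0 M ≤ 1 - alphaCoef k1 M) :
    IsLeast (RayleighSet k0 k1 (qstar k0 k1 M)) M := by
  have hpos := integral_eigenfun_sq_pos hM hα
  refine ⟨?_, ?_⟩
  · convert div_mem_rayleighSet (isTest_eigenfun hM hα) hpos
    rw [rayleighNumerator_qstar_eigenfun hM hα, mul_div_cancel_right₀ _ hpos.ne']
  · rintro _ ⟨y, g, hy, hpos, rfl⟩
    show M ≤ rayleighNumerator k0 k1 (qstar k0 k1 M) y g / _
    rw [le_div_iff₀ hpos, rayleighNumerator_qstar hM hα hy, le_add_iff_nonneg_right]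
    exact intervalIntegral.integral_nonneg zero_le_one fun _ _ => sq_nonneg _

theorem lam1_le_of_integral_le (hM : 0 < M) (hα : alphaCoef k0 M ≤ 1 - alphaCoef k1 M)
    {q : ℝ → ℝ} (hq : IntegrableOn q (Icc (0:ℝ) 1))
    (hq0 : ∀ᵐ x ∂(volume.restrict (Icc (0:ℝ) 1)), 0 ≤ q x)
    (hq1 : ∫ x in (0:ℝ)..1, q x ≤ ∫ x in (0:ℝ)..1, qstar k0 k1 M x) :
    lam1 k0 k1 q ≤ M := by
  have hpos := integral_eigenfun_sq_pos hM hα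
  have hw := isTest_eigenfun hM hα
  have hw2 : ContinuousOn (fun x => eigenfun k0 k1 M x ^ 2) (Icc 0 1) :=
    (continuous_eigenfun.pow 2).continuousOn
  have hqw := hq.mul_continuousOn hw2 isCompact_Icc
  refine (lam1_le_of_mem_rayleighSet hq0 (div_mem_rayleighSet hw hpos)).trans ?_
  rw [div_le_iff₀ hpos, ← rayleighNumerator_qstar_eigenfun hM hα]
  refine rayleighNumerator_le_of_integral_le hw.2.2 hqw
    (integrableOn_qstar.mul_continuousOn hw2 isCompact_Icc) ?_
  calc ∫ x in (0:ℝ)..1, q x * eigenfun k0 k1 M x ^ 2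
      ≤ ∫ x in (0:ℝ)..1, q x := by
        refine intervalIntegral.integral_mono_ae_restrict zero_le_one
          ((intervalIntegrable_iff_integrableOn_Icc_of_le zero_le_one).2 hqw)
          ((intervalIntegrable_iff_integrableOn_Icc_of_le zero_le_one).2 hq) ?_
        filter_upwards [hq0] with x hx
        exact mul_le_of_le_one_right hx (cos_sq_le_one _)
    _ ≤ ∫ x in (0:ℝ)..1, qstar k0 k1 M x * eigenfun k0 k1 M x ^ 2 := by
        simpa only [qstar_mul_eigenfun_sq] using hq1

end OptimalPotential

theorem stmt1_general (k0 k1 : ℝ)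
    (M : ℝ) (hM : 0 < M)
    (hMeq : 1 - alphaCoef k0 M - alphaCoef k1 M = 1 / M) :
    (∀ x : ℝ, 0 ≤ qstar k0 k1 M x) ∧
    (∫ x in (0:ℝ)..1, qstar k0 k1 M x) = 1 ∧
    lam1 k0 k1 (qstar k0 k1 M) = M ∧
    (∀ q : ℝ → ℝ, IntegrableOn q (Icc (0:ℝ) 1) →
      (∀ᵐ x ∂(volume.restrict (Icc (0:ℝ) 1)), 0 ≤ q x) →
      (∫ x in (0:ℝ)..1, q x) = 1 → lam1 k0 k1 q ≤ M) ∧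
    IsGreatest { r : ℝ | ∃ q : ℝ → ℝ, IntegrableOn q (Icc (0:ℝ) 1) ∧
      (∀ᵐ x ∂(volume.restrict (Icc (0:ℝ) 1)), 0 ≤ q x) ∧
      (∫ x in (0:ℝ)..1, q x) = 1 ∧ r = lam1 k0 k1 q } M := by
  have hα : alphaCoef k0 M ≤ 1 - alphaCoef k1 M := by have := one_div_pos.2 hM; linarith
  have hqstar := integral_qstar hM hMeq
  have hlam : lam1 k0 k1 (qstar k0 k1 M) = M := (isLeast_rayleighSet_qstar hM hα).csInf_eq
  have hle : ∀ q : ℝ → ℝ, IntegrableOn q (Icc (0:ℝ) 1) →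
      (∀ᵐ x ∂(volume.restrict (Icc (0:ℝ) 1)), 0 ≤ q x) →
      (∫ x in (0:ℝ)..1, q x) = 1 → lam1 k0 k1 q ≤ M :=
    fun q hq hq0 hq1 => lam1_le_of_integral_le hM hα hq hq0 (hq1.trans hqstar.symm).le
  refine ⟨qstar_nonneg hM.le, hqstar, hlam, hle,
    ⟨qstar k0 k1 M, integrableOn_qstar, ae_of_all _ (qstar_nonneg hM.le), hqstar, hlam.symm⟩, ?_⟩
  rintro _ ⟨q, hq, hq0, hq1, rfl⟩
  exact hle q hq hq0 hq1

theorem stmt1 (k0 k1 : ℝ) (hk0 : 0 ≤ k0) (hk01 : k0 ≤ k1)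
    (M : ℝ) (hM : 0 < M)
    (hMeq : 1 - alphaCoef k0 M - alphaCoef k1 M = 1 / M) :
    (∀ x : ℝ, 0 ≤ qstar k0 k1 M x) ∧
    (∫ x in (0:ℝ)..1, qstar k0 k1 M x) = 1 ∧
    lam1 k0 k1 (qstar k0 k1 M) = M ∧
    (∀ q : ℝ → ℝ, IntegrableOn q (Icc (0:ℝ) 1) →
      (∀ᵐ x ∂(volume.restrict (Icc (0:ℝ) 1)), 0 ≤ q x) →
      (∫ x in (0:ℝ)..1, q x) = 1 → lam1 k0 k1 q ≤ M) ∧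
    IsGreatest { r : ℝ | ∃ q : ℝ → ℝ, IntegrableOn q (Icc (0:ℝ) 1) ∧
      (∀ᵐ x ∂(volume.restrict (Icc (0:ℝ) 1)), 0 ≤ q x) ∧
      (∫ x in (0:ℝ)..1, q x) = 1 ∧ r = lam1 k0 k1 q } M :=
  stmt1_general k0 k1 M hM hMeq
end

section
/- Let q ∈ L¹[0,1], λ ∈ ℝ, and let y be a test function. Then the following are equivalent: (i) for every test function z one has ∫₀¹ (y'(x) z'(x) + (q(x) − λ) y(x) z(x)) dx + k₀² y(0) z(0) + k₁² y(1) z(1) = 0; (ii) y' has an absolutely continuous representative w on [0,1] whose derivative satisfies w' = (q − λ)·y almost everywhere (i.e. y ∈ W₁²[0,1] solves −y'' + (q − λ) y = 0 a.e.), and the boundary conditions w(0) − k₀² y(0) = 0 and w(1) + k₁² y(1) = 0 hold. -/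
open MeasureTheory Set Real Filter

/-!
Write `f = (q - λ) y` and let `w` be a primitive of `f`. Integrating `f z` by parts against `w`
turns the weak form into `∫ (y' - w) z' + (w(1) + k₁² y(1)) z(1) - (w(0) - k₀² y(0)) z(0)`.
Under (ii) each term vanishes with `w` the given representative of `y'`. Conversely, normalise
`w(0) = k₀² y(0)`: testing with `z ≡ 1` gives `w(1) + k₁² y(1) = 0`, and then testing with
`z = ∫₀ˣ (y' - w)` gives `∫ (y' - w)² = 0`, so `w = y'` almost everywhere.
-/

open intervalIntegral

section Primitive

variable {a b : ℝ} {f h w z : ℝ → ℝ}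

theorem IntervalIntegrable.ae_hasDerivAt_const_add_integral (hf : IntervalIntegrable f volume a b)
    (c : ℝ) : ∀ᵐ x, x ∈ uIcc a b → HasDerivAt (fun x => c + ∫ t in a..x, f t) (f x) x := by
  filter_upwards [hf.ae_hasDerivAt_integral] with x hx hmem
  exact (hx hmem a left_mem_uIcc).const_add c

theorem IntervalIntegrable.absolutelyContinuousOnInterval_const_add_integral
    (hf : IntervalIntegrable f volume a b) (c : ℝ) :
    AbsolutelyContinuousOnInterval (fun x => c + ∫ t in a..x, f t) a b := by
  have hc : AbsolutelyContinuousOnInterval (fun _ => c) a b := by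
    simp [AbsolutelyContinuousOnInterval, tendsto_const_nhds]
  exact hc.fun_add (hf.absolutelyContinuousOnInterval_intervalIntegral left_mem_uIcc)

theorem continuousOn_Icc_of_eq_add_integral (hab : a ≤ b) (hf : IntervalIntegrable f volume a b)
    (hw : ∀ x ∈ Icc a b, w x = w a + ∫ t in a..x, f t) : ContinuousOn w (Icc a b) := by
  rw [← uIcc_of_le hab] at hw ⊢
  exact (hf.absolutelyContinuousOnInterval_const_add_integral (w a)).continuousOn.congr hw

theorem integral_mul_add_mul_eq_sub_of_eq_add_integral (hf : IntervalIntegrable f volume a b)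
    (hh : IntervalIntegrable h volume a b)
    (hw : ∀ x ∈ uIcc a b, w x = w a + ∫ t in a..x, f t)
    (hz : ∀ x ∈ uIcc a b, z x = z a + ∫ t in a..x, h t) :
    ∫ x in a..b, (f x * z x + w x * h x) = w b * z b - w a * z a := by
  have hWZ := (hf.absolutelyContinuousOnInterval_const_add_integral (w a)).integral_deriv_mul_eq_sub
    (hh.absolutelyContinuousOnInterval_const_add_integral (z a))
  simp only [integral_same, add_zero, ← hw b right_mem_uIcc, ← hz b right_mem_uIcc] at hWZ
  rw [← hWZ]
  refine integral_congr_ae ?_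
  filter_upwards [hf.ae_hasDerivAt_const_add_integral (w a),
    hh.ae_hasDerivAt_const_add_integral (z a)] with x hW hZ hx
  have hx' := uIoc_subset_uIcc hx
  rw [(hW hx').deriv, (hZ hx').deriv, ← hw x hx', ← hz x hx']

end Primitive

theorem ContinuousOn.memLp_restrict_Icc {E : Type*} [NormedAddCommGroup E] {f : ℝ → E}
    {a b : ℝ} (hf : ContinuousOn f (Icc a b)) (p : ENNReal) :
    MemLp f p (volume.restrict (Icc a b)) := by
  obtain ⟨C, hC⟩ := isCompact_Icc.exists_bound_of_continuousOn hf
  exact MemLp.of_bound (hf.aestronglyMeasurable measurableSet_Icc) C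
    ((ae_restrict_iff' measurableSet_Icc).2 (Eventually.of_forall hC))

theorem ae_eq_zero_of_integral_mul_self_eq_zero {a b : ℝ} (hab : a ≤ b) {u : ℝ → ℝ}
    (hu : IntegrableOn (fun x => u x * u x) (Icc a b)) (h0 : ∫ x in a..b, u x * u x = 0) :
    u =ᵐ[volume.restrict (Icc a b)] 0 := by
  rw [integral_of_le hab, ← integral_Icc_eq_integral_Ioc] at h0
  filter_upwards [(integral_eq_zero_iff_of_nonneg_ae
    (Eventually.of_forall fun x => mul_self_nonneg (u x)) hu).1 h0] with x hx
  exact mul_self_eq_zero.1 hx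

namespace IsTest

variable {y g z h : ℝ → ℝ}

theorem memLp_two (hy : IsTest y g) : MemLp g 2 (volume.restrict (Icc 0 1)) :=
  (memLp_two_iff_integrable_sq hy.2.1.aestronglyMeasurable).2 hy.2.2

theorem intervalIntegrable (hy : IsTest y g) : IntervalIntegrable g volume 0 1 :=
  (intervalIntegrable_iff_integrableOn_Icc_of_le zero_le_one).2 hy.2.1

theorem continuousOn (hy : IsTest y g) : ContinuousOn y (Icc 0 1) :=
  continuousOn_Icc_of_eq_add_integral zero_le_one hy.intervalIntegrable hy.1

theorem const (c : ℝ) : IsTest (fun _ => c) 0 :=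
  ⟨fun _ _ => by simp, integrableOn_zero, by simp⟩

theorem primitive (hg : MemLp g 2 (volume.restrict (Icc 0 1))) :
    IsTest (fun x => ∫ t in (0:ℝ)..x, g t) g :=
  ⟨fun _ _ => by simp, hg.integrable one_le_two, (memLp_two_iff_integrable_sq hg.1).1 hg⟩

/-- Integration by parts of `f z` against the primitive `w` of `f`. -/
theorem weak_form_eq (k0 k1 : ℝ) (hy : IsTest y g) (hz : IsTest z h) {f w : ℝ → ℝ}
    (hf : IntervalIntegrable f volume 0 1)
    (hw : ∀ x ∈ Icc (0:ℝ) 1, w x = w 0 + ∫ t in (0:ℝ)..x, f t) :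
    (∫ x in (0:ℝ)..1, (g x * h x + f x * z x)) + k0 ^ 2 * y 0 * z 0 + k1 ^ 2 * y 1 * z 1
      = (∫ x in (0:ℝ)..1, (g x - w x) * h x)
        + (w 1 + k1 ^ 2 * y 1) * z 1 - (w 0 - k0 ^ 2 * y 0) * z 0 := by
  have hgh : IntervalIntegrable (fun x => g x * h x) volume 0 1 :=
    (intervalIntegrable_iff_integrableOn_Icc_of_le zero_le_one).2
      (hy.memLp_two.integrable_mul hz.memLp_two)
  have hwh : IntervalIntegrable (fun x => w x * h x) volume 0 1 :=
    hz.intervalIntegrable.continuousOn_mul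
      (by simpa [uIcc_of_le zero_le_one] using continuousOn_Icc_of_eq_add_integral zero_le_one hf hw)
  have hgwh : IntervalIntegrable (fun x => (g x - w x) * h x) volume 0 1 := by
    simpa only [sub_mul] using hgh.sub hwh
  have hfz : IntervalIntegrable (fun x => f x * z x) volume 0 1 :=
    hf.mul_continuousOn (by simpa [uIcc_of_le zero_le_one] using hz.continuousOn)
  have hparts := integral_mul_add_mul_eq_sub_of_eq_add_integral hf hz.intervalIntegrable
    (by simpa [uIcc_of_le zero_le_one] using hw) (by simpa [uIcc_of_le zero_le_one] using hz.1)
  have hsplit : ∫ x in (0:ℝ)..1, (g x * h x + f x * z x)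
      = (∫ x in (0:ℝ)..1, (g x - w x) * h x) + ∫ x in (0:ℝ)..1, (f x * z x + w x * h x) := by
    rw [← integral_add hgwh (hfz.add hwh)]
    exact integral_congr fun x _ => by ring
  rw [hsplit, hparts]
  ring

end IsTest

theorem stmt8_general (k0 k1 : ℝ)
    (q : ℝ → ℝ) (hq : IntegrableOn q (Icc (0:ℝ) 1)) (lam : ℝ)
    (y g : ℝ → ℝ) (hy : IsTest y g) :
    (∀ z h : ℝ → ℝ, IsTest z h →
        (∫ x in (0:ℝ)..1, (g x * h x + (q x - lam) * y x * z x))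
          + k0 ^ 2 * y 0 * z 0 + k1 ^ 2 * y 1 * z 1 = 0)
      ↔ (∃ w : ℝ → ℝ,
          (∀ᵐ x ∂(volume.restrict (Icc (0:ℝ) 1)), w x = g x) ∧
          (∀ x ∈ Icc (0:ℝ) 1, w x = w 0 + ∫ t in (0:ℝ)..x, (q t - lam) * y t) ∧
          w 0 - k0 ^ 2 * y 0 = 0 ∧ w 1 + k1 ^ 2 * y 1 = 0) := by
  have hf : IntervalIntegrable (fun x => (q x - lam) * y x) volume 0 1 :=
    (intervalIntegrable_iff_integrableOn_Icc_of_le zero_le_one).2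
      ((hq.sub (integrableOn_const (by simp))).mul_continuousOn hy.continuousOn isCompact_Icc)
  constructor
  · intro hweak
    set w := fun x => k0 ^ 2 * y 0 + ∫ t in (0:ℝ)..x, (q t - lam) * y t
    have hw : ∀ x ∈ Icc (0:ℝ) 1, w x = w 0 + ∫ t in (0:ℝ)..x, (q t - lam) * y t := by simp [w]
    have hw0 : w 0 - k0 ^ 2 * y 0 = 0 := by simp [w]
    have hw1 : w 1 + k1 ^ 2 * y 1 = 0 := by
      have h1 := hweak _ _ (IsTest.const 1)
      rw [hy.weak_form_eq k0 k1 (IsTest.const 1) hf hw] at h1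
      simpa [hw0] using h1
    have hgw : MemLp (fun x => g x - w x) 2 (volume.restrict (Icc 0 1)) :=
      hy.memLp_two.sub ((continuousOn_Icc_of_eq_add_integral zero_le_one hf hw).memLp_restrict_Icc 2)
    have hgw_sq := hweak _ _ (IsTest.primitive hgw)
    rw [hy.weak_form_eq k0 k1 (IsTest.primitive hgw) hf hw, hw0, hw1] at hgw_sq
    simp only [zero_mul, add_zero, sub_zero] at hgw_sq
    refine ⟨w, ?_, hw, hw0, hw1⟩
    filter_upwards [ae_eq_zero_of_integral_mul_self_eq_zero zero_le_one
      (hgw.integrable_mul hgw) hgw_sq] with x hx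
    exact (sub_eq_zero.1 hx).symm
  · rintro ⟨w, hwg, hw, hw0, hw1⟩ z h hz
    have hgw : ∫ x in (0:ℝ)..1, (g x - w x) * h x = 0 := by
      refine integral_zero_ae ?_
      filter_upwards [(ae_restrict_iff' measurableSet_Icc).1 hwg] with x hx hmem
      rw [hx (Ioc_subset_Icc_self (by simpa using hmem)), sub_self, zero_mul]
    rw [hy.weak_form_eq k0 k1 hz hf hw, hgw, hw0, hw1]
    ring

theorem stmt8 (k0 k1 : ℝ) (hk0 : 0 ≤ k0) (hk01 : k0 ≤ k1)
    (q : ℝ → ℝ) (hq : IntegrableOn q (Icc (0:ℝ) 1)) (lam : ℝ)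
    (y g : ℝ → ℝ) (hy : IsTest y g) :
    (∀ z h : ℝ → ℝ, IsTest z h →
        (∫ x in (0:ℝ)..1, (g x * h x + (q x - lam) * y x * z x))
          + k0 ^ 2 * y 0 * z 0 + k1 ^ 2 * y 1 * z 1 = 0)
      ↔ (∃ w : ℝ → ℝ,
          (∀ᵐ x ∂(volume.restrict (Icc (0:ℝ) 1)), w x = g x) ∧
          (∀ x ∈ Icc (0:ℝ) 1, w x = w 0 + ∫ t in (0:ℝ)..x, (q t - lam) * y t) ∧
          w 0 - k0 ^ 2 * y 0 = 0 ∧ w 1 + k1 ^ 2 * y 1 = 0) :=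
  stmt8_general k0 k1 q hq lam y g hy
end
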